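/- Let S ⊆ {1,2,…} be countable, let μ be a probability measure on S, and let κ : S × S → (0,∞) satisfy inf κ > 0, ∫_S e^{a ψ(x)} dμ(x) < ∞ for some a > 0 where ψ(x) = (∑_{y∈S} κ(x,y)² μ(y))^{1/2}, ‖T_κ‖ < 1, and either (C1) sup κ < ∞ or (C3) κ is non-decreasing in each argument with κ(x,y) ≤ c₁·T_κ[1](x)·T_κ[1](y) for some c₁ > 0. For D ∈ S set M_D = ∑_{y≤D} μ(y), μ̂_D(y) = μ(y)/M_D for y ≤ D and μ̂_D(y) = 0 otherwise, c = M_D, and r̂*(D) = sup{z ≥ 1 : the equation f = z·exp(∑_{y≤D} c·κ(x,y)(f(y)−1) μ̂_D(y)) has an everywhere finite solution f ≥ 1}. Then r̂*(D) ≥ r*_κ for every D, r̂*(D) is non-increasing in D, and lim_{D→∞} r̂*(D) = r*_κ. -/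

import Mathlib

open MeasureTheory Filter
open scoped ENNReal

/-- Extended exponential on `ℝ≥0∞`, with `eexp ⊤ = ⊤`. -/
noncomputable def eexp (t : ℝ≥0∞) : ℝ≥0∞ :=
  if t = ⊤ then ⊤ else ENNReal.ofReal (Real.exp t.toReal)

/-- The nonlinear operator `Φ_{z,κ}[f](x) = z·exp(T_κ[f-1](x))`. -/
noncomputable def Phi {S : Type*} [MeasurableSpace S] (μ : Measure S)
    (κ : S → S → ℝ) (z : ℝ) (f : S → ℝ≥0∞) : S → ℝ≥0∞ :=
  fun x => ENNReal.ofReal z * eexp (∫⁻ y, ENNReal.ofReal (κ x y) * (f y - 1) ∂μ)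

/-- The `L²(μ)` operator norm of the integral operator `T_κ`. -/
noncomputable def opNorm {S : Type*} [MeasurableSpace S] (μ : Measure S)
    (κ : S → S → ℝ) : ℝ≥0∞ :=
  ⨆ (f : S → ℝ≥0∞) (_ : Measurable f) (_ : (∫⁻ x, f x ^ 2 ∂μ) ^ ((1 : ℝ) / 2) ≤ 1),
    (∫⁻ x, (∫⁻ y, ENNReal.ofReal (κ x y) * f y ∂μ) ^ 2 ∂μ) ^ ((1 : ℝ) / 2)

/-- `r*`: the supremum of the set of `z ≥ 1` for which the equation
`g = z·e^{T[g−1]}` has a `μ`-a.e. finite measurable solution `g ≥ 1`. -/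
noncomputable def rstar {S : Type*} [MeasurableSpace S] (μ : Measure S)
    (κ : S → S → ℝ) : ℝ :=
  sSup {z : ℝ | 1 ≤ z ∧ ∃ g : S → ℝ≥0∞, Measurable g ∧ (∀ x, 1 ≤ g x) ∧
    (∀ᵐ x ∂μ, g x ≠ ⊤) ∧ (∀ᵐ x ∂μ, Phi μ κ z g x = g x)}

/-- Variant of `r*` requiring an everywhere finite solution. -/
noncomputable def rstarAll {S : Type*} [MeasurableSpace S] (μ : Measure S)
    (κ : S → S → ℝ) : ℝ :=
  sSup {z : ℝ | 1 ≤ z ∧ ∃ g : S → ℝ≥0∞, Measurable g ∧ (∀ x, 1 ≤ g x) ∧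
    (∀ x, g x ≠ ⊤) ∧ (∀ x, Phi μ κ z g x = g x)}

/-!
For `z ≥ 1` the operator `Φ = Phi μ κ z` is monotone, so as soon as it has a supersolution
`g ≥ 1` its least fixed point lies below `g`. For the restriction of `μ` to the finite set
`{y ≤ D}`, a fixed point that is finite `μ`-a.e. is finite everywhere, since `T` then only sees
finitely many atoms. Comparing `Φ` for `μ`, `μ|_{≤D'}` and `μ|_{≤D}` (with `D ≤ D'`) gives the
two inequalities, once one notes that the rescaling `(c⁻¹ μ, c κ)` does not change `Φ`.

For the limit, let `z` lie below every `r̂*(D)`. The least fixed points for `μ|_{≤D}` increase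
with `D` to a fixed point of `Φ` for `μ`. Since `κ ≥ b > 0`, a fixed point `g` for `μ|_A`
satisfies `(z e^{bJ} - 1) μ(A) ≤ J` with `J = ∫_A (g - 1) dμ`, whence `J ≤ 2 / (μ(A) b²)`
uniformly in `D`; so the limit is finite `μ`-a.e. and `z ≤ r*`.
-/

lemma eexp_eq_exp_coe (t : ℝ≥0∞) : eexp t = EReal.exp t := by
  by_cases ht : t = ⊤
  · simp [eexp, ht]
  · rw [eexp, if_neg ht, ← EReal.coe_ennreal_toReal ht, EReal.exp_coe]

lemma monotone_eexp : Monotone eexp := fun s t hst => by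
  simpa only [eexp_eq_exp_coe] using
    EReal.exp_monotone (EReal.coe_ennreal_le_coe_ennreal_iff.2 hst)

lemma continuous_eexp : Continuous eexp := by
  simp only [funext eexp_eq_exp_coe]
  exact ENNReal.logHomeomorph.symm.continuous.comp continuous_coe_ennreal_ereal

lemma eexp_iSup {ι : Sort*} [Nonempty ι] (u : ι → ℝ≥0∞) : eexp (⨆ i, u i) = ⨆ i, eexp (u i) :=
  monotone_eexp.map_ciSup_of_continuousAt continuous_eexp.continuousAt

lemma one_le_eexp (t : ℝ≥0∞) : 1 ≤ eexp t := by
  simp [eexp_eq_exp_coe, EReal.coe_ennreal_nonneg]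

lemma eexp_eq_top_iff {t : ℝ≥0∞} : eexp t = ⊤ ↔ t = ⊤ := by
  simp [eexp_eq_exp_coe]

lemma eexp_ofReal {r : ℝ} (hr : 0 ≤ r) :
    eexp (ENNReal.ofReal r) = ENNReal.ofReal (Real.exp r) := by
  rw [eexp, if_neg ENNReal.ofReal_ne_top, ENNReal.toReal_ofReal hr]

section Operator

variable {X : Type*} [MeasurableSpace X] {μ ν : Measure X} {κ : X → X → ℝ} {z z' : ℝ}
  {f g : X → ℝ≥0∞}

lemma Phi_mono (hfg : f ≤ g) : Phi μ κ z f ≤ Phi μ κ z g := fun _ =>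
  mul_le_mul_right (monotone_eexp (lintegral_mono fun y =>
    mul_le_mul_right (tsub_le_tsub_right (hfg y) 1) _)) _

lemma Phi_mono_measure (hμν : μ ≤ ν) : Phi μ κ z f ≤ Phi ν κ z f := fun _ =>
  mul_le_mul_right (monotone_eexp (lintegral_mono' hμν le_rfl)) _

lemma Phi_mono_scalar (hzz' : z ≤ z') : Phi μ κ z f ≤ Phi μ κ z' f := fun _ =>
  mul_le_mul_left (ENNReal.ofReal_le_ofReal hzz') _

lemma one_le_Phi (hz : 1 ≤ z) (x : X) : 1 ≤ Phi μ κ z f x :=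
  one_le_mul (ENNReal.one_le_ofReal.2 hz) (one_le_eexp _)

lemma Phi_congr_ae (hfg : f =ᵐ[μ] g) : Phi μ κ z f = Phi μ κ z g := by
  ext x
  unfold Phi
  congr 2
  refine lintegral_congr_ae ?_
  filter_upwards [hfg] with y hy
  rw [hy]

lemma Phi_smul_measure_mul_kernel {c : ℝ} (hc : 0 < c) :
    Phi ((ENNReal.ofReal c)⁻¹ • μ) (fun x y => c * κ x y) z = Phi μ κ z := by
  ext x
  unfold Phi
  congr 2
  simp_rw [lintegral_smul_measure, ENNReal.ofReal_mul hc.le, mul_assoc,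
    lintegral_const_mul' _ _ ENNReal.ofReal_ne_top, smul_eq_mul, ← mul_assoc]
  rw [ENNReal.inv_mul_cancel (ENNReal.ofReal_pos.2 hc).ne' ENNReal.ofReal_ne_top, one_mul]

lemma Phi_one : Phi μ κ 1 1 = 1 := by
  ext x
  simp [Phi, eexp]

noncomputable def PhiOrderHom (μ : Measure X) (κ : X → X → ℝ) (z : ℝ) :
    (X → ℝ≥0∞) →o (X → ℝ≥0∞) :=
  ⟨Phi μ κ z, fun _ _ => Phi_mono⟩

noncomputable def minimalSolution (μ : Measure X) (κ : X → X → ℝ) (z : ℝ) : X → ℝ≥0∞ :=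
  (PhiOrderHom μ κ z).lfp

lemma Phi_minimalSolution : Phi μ κ z (minimalSolution μ κ z) = minimalSolution μ κ z :=
  (PhiOrderHom μ κ z).map_lfp

lemma minimalSolution_le (hg : Phi μ κ z g ≤ g) : minimalSolution μ κ z ≤ g :=
  (PhiOrderHom μ κ z).lfp_le hg

lemma one_le_minimalSolution (hz : 1 ≤ z) (x : X) : 1 ≤ minimalSolution μ κ z x :=
  Phi_minimalSolution (μ := μ) (κ := κ) ▸ one_le_Phi hz x

lemma minimalSolution_mono_measure (hμν : μ ≤ ν) :
    minimalSolution μ κ z ≤ minimalSolution ν κ z :=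
  minimalSolution_le ((Phi_mono_measure hμν).trans Phi_minimalSolution.le)

end Operator

section Countable

variable {X : Type*} [MeasurableSpace X] [Countable X] [MeasurableSingletonClass X]
  {μ : Measure X}

lemma iSup_setLIntegral_eq_lintegral_iSup {A : ℕ → Set X} (hA : Monotone A)
    (hAU : ⋃ k, A k = Set.univ) {F : ℕ → X → ℝ≥0∞} (hF : Monotone F) :
    ⨆ k, ∫⁻ y in A k, F k y ∂μ = ∫⁻ y, ⨆ k, F k y ∂μ := by
  have hmono : Monotone fun k => (A k).indicator (F k) := fun k l hkl y =>
    (Set.indicator_le_indicator_of_subset (hA hkl) (fun _ => zero_le) y).trans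
      (Set.indicator_le_indicator (hF hkl y))
  simp_rw [← lintegral_indicator (Set.to_countable _).measurableSet]
  rw [← lintegral_iSup (fun _ => measurable_of_countable _) hmono]
  congr 1
  ext y
  obtain ⟨k₀, hk₀⟩ := Set.mem_iUnion.1 (hAU.symm ▸ Set.mem_univ y : y ∈ ⋃ k, A k)
  rw [← (hmono.apply₂ y).iSup_nat_add k₀, ← (hF.apply₂ y).iSup_nat_add k₀]
  exact iSup_congr fun n => Set.indicator_of_mem (hA (Nat.le_add_left k₀ n) hk₀) _

lemma setLIntegral_ne_top_of_finite [IsFiniteMeasure μ] {A : Set X} (hA : A.Finite)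
    {f : X → ℝ≥0∞} (hf : ∀ᵐ y ∂μ, f y ≠ ⊤) : ∫⁻ y in A, f y ∂μ ≠ ⊤ := by
  rw [← hA.coe_toFinset, lintegral_finset]
  refine ENNReal.sum_ne_top.2 fun y _ => ?_
  by_cases hy : μ {y} = 0
  · simp [hy]
  · exact ENNReal.mul_ne_top (ae_iff_of_countable.1 hf y hy) (measure_ne_top μ _)

lemma Phi_iSup_restrict {κ : X → X → ℝ} {z : ℝ} {A : ℕ → Set X} (hA : Monotone A)
    (hAU : ⋃ k, A k = Set.univ) {F : ℕ → X → ℝ≥0∞} (hF : Monotone F) (x : X) :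
    Phi μ κ z (⨆ k, F k) x = ⨆ k, Phi (μ.restrict (A k)) κ z (F k) x := by
  have hG : Monotone fun k y => ENNReal.ofReal (κ x y) * (F k y - 1) := fun k l hkl y =>
    mul_le_mul_right (tsub_le_tsub_right (hF hkl y) 1) _
  simp only [Phi, ← ENNReal.mul_iSup, ← eexp_iSup, iSup_setLIntegral_eq_lintegral_iSup hA hAU hG,
    ← ENNReal.mul_iSup, ← ENNReal.iSup_sub, iSup_apply]

end Countable

lemma le_of_mul_exp_sub_one_mul_le {b m z t : ℝ} (hb : 0 < b) (hm : 0 < m)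
    (ht : 0 ≤ t) (hz : 1 ≤ z) (h : (z * Real.exp (b * t) - 1) * m ≤ t) :
    z ≤ 1 + 2 / (m ^ 2 * b ^ 2) ∧ t ≤ 2 / (m * b ^ 2) := by
  have hexp := Real.quadratic_le_exp_of_nonneg (mul_nonneg hb.le ht)
  have hze : Real.exp (b * t) ≤ z * Real.exp (b * t) :=
    le_mul_of_one_le_left (Real.exp_nonneg _) hz
  have hquad : m * b ^ 2 * t ^ 2 ≤ 2 * t := by
    nlinarith [mul_le_mul_of_nonneg_right (hexp.trans hze) hm.le, mul_pos hm hb]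
  have ht' : t ≤ 2 / (m * b ^ 2) := by
    rcases ht.eq_or_lt with rfl | htpos
    · positivity
    · rw [le_div_iff₀ (by positivity)]
      nlinarith
  refine ⟨?_, ht'⟩
  have hz' : (z - 1) * m ≤ t := by
    nlinarith [mul_le_mul_of_nonneg_left (Real.one_le_exp (mul_nonneg hb.le ht))
      (by linarith : (0 : ℝ) ≤ z)]
  calc z ≤ 1 + t / m := sub_le_iff_le_add'.1 ((le_div_iff₀ hm).2 hz')
    _ ≤ 1 + 2 / (m * b ^ 2) / m := by gcongr
    _ = 1 + 2 / (m ^ 2 * b ^ 2) := by field_simp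

section SolutionSets

variable {X : Type*} [MeasurableSpace X] {μ : Measure X} {κ : X → X → ℝ} {z : ℝ}
  {g : X → ℝ≥0∞}

def solutionSet (μ : Measure X) (κ : X → X → ℝ) : Set ℝ :=
  {z : ℝ | 1 ≤ z ∧ ∃ g : X → ℝ≥0∞, Measurable g ∧ (∀ x, 1 ≤ g x) ∧
    (∀ x, g x ≠ ⊤) ∧ (∀ x, Phi μ κ z g x = g x)}

def aeSolutionSet (μ : Measure X) (κ : X → X → ℝ) : Set ℝ :=
  {z : ℝ | 1 ≤ z ∧ ∃ g : X → ℝ≥0∞, Measurable g ∧ (∀ x, 1 ≤ g x) ∧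
    (∀ᵐ x ∂μ, g x ≠ ⊤) ∧ (∀ᵐ x ∂μ, Phi μ κ z g x = g x)}

lemma rstarAll_eq_sSup : rstarAll μ κ = sSup (solutionSet μ κ) := rfl

lemma rstar_eq_sSup : rstar μ κ = sSup (aeSolutionSet μ κ) := rfl

lemma one_mem_solutionSet : (1 : ℝ) ∈ solutionSet μ κ :=
  ⟨le_rfl, 1, measurable_const, fun _ => le_rfl, fun _ => ENNReal.one_ne_top,
    fun x => congrFun Phi_one x⟩

lemma one_mem_aeSolutionSet : (1 : ℝ) ∈ aeSolutionSet μ κ :=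
  ⟨le_rfl, 1, measurable_const, fun _ => le_rfl, ae_of_all _ fun _ => ENNReal.one_ne_top,
    ae_of_all _ fun x => congrFun Phi_one x⟩

lemma rstarAll_smul_measure_mul_kernel {c : ℝ} (hc : 0 < c) :
    rstarAll ((ENNReal.ofReal c)⁻¹ • μ) (fun x y => c * κ x y) = rstarAll μ κ := by
  simp only [rstarAll, Phi_smul_measure_mul_kernel hc]

lemma ofReal_mul_eexp_le_of_ae_fixed {b : ℝ} {A : Set X} (hbκ : ∀ x y, b ≤ κ x y)
    (hfix : ∀ᵐ x ∂μ, Phi (μ.restrict A) κ z g x = g x) :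
    ∀ᵐ x ∂μ, ENNReal.ofReal z * eexp (ENNReal.ofReal b * ∫⁻ y in A, (g y - 1) ∂μ) ≤ g x := by
  filter_upwards [hfix] with x hx
  rw [← hx, ← lintegral_const_mul' _ _ ENNReal.ofReal_ne_top]
  exact mul_le_mul_right (monotone_eexp (lintegral_mono fun y =>
    mul_le_mul_left (ENNReal.ofReal_le_ofReal (hbκ x y)) _)) _

lemma bounds_of_ae_fixed [IsFiniteMeasure μ] {b m : ℝ} {A : Set X} (hb : 0 < b)
    (hbκ : ∀ x y, b ≤ κ x y) (hz : 1 ≤ z) (hm : 0 < m) (hmA : ENNReal.ofReal m ≤ μ A)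
    (hfix : ∀ᵐ x ∂μ, Phi (μ.restrict A) κ z g x = g x) (hfin : ∀ᵐ x ∂μ, g x ≠ ⊤) :
    z ≤ 1 + 2 / (m ^ 2 * b ^ 2) ∧ ∫⁻ y in A, (g y - 1) ∂μ ≤ ENNReal.ofReal (2 / (m * b ^ 2)) := by
  set J := ∫⁻ y in A, (g y - 1) ∂μ
  have hlow : ∀ᵐ x ∂μ, ENNReal.ofReal z * eexp (ENNReal.ofReal b * J) ≤ g x :=
    ofReal_mul_eexp_le_of_ae_fixed hbκ hfix
  have : NeZero μ := ⟨by rintro rfl; simp at hmA; linarith⟩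
  obtain ⟨x, hlowx, hx⟩ := (hlow.and hfin).exists
  have hJ : J ≠ ⊤ := by
    rintro hJ
    rw [hJ, ENNReal.mul_top (ENNReal.ofReal_pos.2 hb).ne', eexp_eq_top_iff.2 rfl,
      ENNReal.mul_top (ENNReal.ofReal_pos.2 (by linarith)).ne', top_le_iff] at hlowx
    exact hx hlowx
  have hint : (ENNReal.ofReal z * eexp (ENNReal.ofReal b * J) - 1) * μ A ≤ J := by
    rw [← setLIntegral_const]
    exact lintegral_mono_ae (ae_restrict_of_ae (hlow.mono fun x hx => tsub_le_tsub_right hx 1))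
  have hexp : 1 ≤ z * Real.exp (b * J.toReal) :=
    one_le_mul_of_one_le_of_one_le hz (Real.one_le_exp (by positivity))
  have hreal : (z * Real.exp (b * J.toReal) - 1) * m ≤ J.toReal := by
    rw [← ENNReal.ofReal_le_ofReal_iff ENNReal.toReal_nonneg, ENNReal.ofReal_toReal hJ]
    calc ENNReal.ofReal ((z * Real.exp (b * J.toReal) - 1) * m)
        = (ENNReal.ofReal z * eexp (ENNReal.ofReal b * J) - 1) * ENNReal.ofReal m := by
          rw [ENNReal.ofReal_mul (by linarith), ENNReal.ofReal_sub _ zero_le_one,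
            ENNReal.ofReal_mul (by linarith), ENNReal.ofReal_one, ← eexp_ofReal (by positivity),
            ENNReal.ofReal_mul hb.le, ENNReal.ofReal_toReal hJ]
      _ ≤ (ENNReal.ofReal z * eexp (ENNReal.ofReal b * J) - 1) * μ A := by gcongr
      _ ≤ J := hint
  obtain ⟨hzb, hJb⟩ := le_of_mul_exp_sub_one_mul_le hb hm ENNReal.toReal_nonneg hz hreal
  exact ⟨hzb, (ENNReal.le_ofReal_iff_toReal_le hJ (by positivity)).2 hJb⟩

lemma bddAbove_solutionSet_restrict [IsFiniteMeasure μ] {b : ℝ} {A : Set X} (hb : 0 < b)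
    (hbκ : ∀ x y, b ≤ κ x y) (hA : 0 < μ A) : BddAbove (solutionSet (μ.restrict A) κ) := by
  refine ⟨1 + 2 / ((μ A).toReal ^ 2 * b ^ 2), ?_⟩
  rintro z ⟨hz, g, -, -, hgfin, hgfix⟩
  exact (bounds_of_ae_fixed hb hbκ hz (ENNReal.toReal_pos hA.ne' (measure_ne_top μ A))
    ENNReal.ofReal_toReal_le (ae_of_all _ hgfix) (ae_of_all _ hgfin)).1

end SolutionSets

section Restriction

variable {X : Type*} [MeasurableSpace X] [Countable X] [MeasurableSingletonClass X]
  {μ : Measure X} [IsFiniteMeasure μ] {κ : X → X → ℝ} {z z' : ℝ} {A B : Set X}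
  {g : X → ℝ≥0∞}

lemma minimalSolution_restrict_ne_top (hA : A.Finite)
    (hfin : ∀ᵐ x ∂μ, minimalSolution (μ.restrict A) κ z x ≠ ⊤) (x : X) :
    minimalSolution (μ.restrict A) κ z x ≠ ⊤ := by
  rw [← Phi_minimalSolution]
  refine ENNReal.mul_ne_top ENNReal.ofReal_ne_top (eexp_eq_top_iff.not.2 ?_)
  refine setLIntegral_ne_top_of_finite hA (hfin.mono fun y hy => ?_)
  exact ENNReal.mul_ne_top ENNReal.ofReal_ne_top (ne_top_of_le_ne_top hy tsub_le_self)

lemma mem_solutionSet_of_supersolution (hA : A.Finite) (hz : 1 ≤ z)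
    (hgfin : ∀ᵐ x ∂μ, g x ≠ ⊤) (hg : Phi (μ.restrict A) κ z g ≤ g) :
    z ∈ solutionSet (μ.restrict A) κ :=
  ⟨hz, minimalSolution _ κ z, measurable_of_countable _, one_le_minimalSolution hz,
    minimalSolution_restrict_ne_top hA
      (hgfin.mono fun x hx => ne_top_of_le_ne_top hx (minimalSolution_le hg x)),
    congrFun Phi_minimalSolution⟩

lemma aeSolutionSet_subset_solutionSet_restrict (hA : A.Finite) :
    aeSolutionSet μ κ ⊆ solutionSet (μ.restrict A) κ := by
  rintro z ⟨hz, g, -, -, hgfin, hgfix⟩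
  have hPhi : Phi μ κ z (Phi μ κ z g) = Phi μ κ z g := Phi_congr_ae hgfix
  refine mem_solutionSet_of_supersolution (g := Phi μ κ z g) hA hz ?_ ?_
  · filter_upwards [hgfix, hgfin] with x hx hxfin
    rwa [hx]
  · exact (Phi_mono_measure Measure.restrict_le_self).trans hPhi.le

lemma solutionSet_restrict_anti (hA : A.Finite) (hAB : A ⊆ B) :
    solutionSet (μ.restrict B) κ ⊆ solutionSet (μ.restrict A) κ := by
  rintro z ⟨hz, g, -, -, hgfin, hgfix⟩
  exact mem_solutionSet_of_supersolution hA hz (ae_of_all _ hgfin) fun x =>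
    (Phi_mono_measure (Measure.restrict_mono hAB le_rfl) x).trans (hgfix x).le

lemma mem_solutionSet_restrict_of_le (hA : A.Finite) (hz : 1 ≤ z) (hzz' : z ≤ z')
    (hz' : z' ∈ solutionSet (μ.restrict A) κ) : z ∈ solutionSet (μ.restrict A) κ := by
  obtain ⟨-, g, -, -, hgfin, hgfix⟩ := hz'
  exact mem_solutionSet_of_supersolution hA hz (ae_of_all _ hgfin) fun x =>
    (Phi_mono_scalar hzz' x).trans (hgfix x).le

lemma mem_aeSolutionSet_of_forall_mem_solutionSet_restrict {b : ℝ} (hb : 0 < b)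
    (hbκ : ∀ x y, b ≤ κ x y) {A : ℕ → Set X} (hA : Monotone A) (hAU : ⋃ k, A k = Set.univ)
    (hA0 : 0 < μ (A 0)) (hz : ∀ k, z ∈ solutionSet (μ.restrict (A k)) κ) :
    z ∈ aeSolutionSet μ κ := by
  have hz1 : 1 ≤ z := (hz 0).1
  set m : ℕ → X → ℝ≥0∞ := fun k => minimalSolution (μ.restrict (A k)) κ z
  have hmono : Monotone m := fun k l hkl =>
    minimalSolution_mono_measure (Measure.restrict_mono (hA hkl) le_rfl)
  have hfix : ∀ k, Phi (μ.restrict (A k)) κ z (m k) = m k := fun k => Phi_minimalSolution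
  have hfin : ∀ k x, m k x ≠ ⊤ := fun k x => by
    obtain ⟨-, g, -, -, hgfin, hgfix⟩ := hz k
    exact ne_top_of_le_ne_top (hgfin x) (minimalSolution_le (fun x => (hgfix x).le) x)
  have hbound : ∀ k, ∫⁻ y in A k, (m k y - 1) ∂μ
      ≤ ENNReal.ofReal (2 / ((μ (A 0)).toReal * b ^ 2)) := fun k =>
    (bounds_of_ae_fixed hb hbκ hz1 (ENNReal.toReal_pos hA0.ne' (measure_ne_top μ _))
      (ENNReal.ofReal_toReal_le.trans (measure_mono (hA k.zero_le)))
      (ae_of_all _ fun x => congrFun (hfix k) x) (ae_of_all _ (hfin k))).2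
  have hint : ∫⁻ y, ((⨆ k, m k) y - 1) ∂μ ≠ ⊤ := by
    simp only [iSup_apply, ENNReal.iSup_sub]
    rw [← iSup_setLIntegral_eq_lintegral_iSup hA hAU fun k l hkl y =>
      tsub_le_tsub_right (hmono hkl y) 1]
    exact ne_top_of_le_ne_top ENNReal.ofReal_ne_top (iSup_le hbound)
  refine ⟨hz1, ⨆ k, m k, measurable_of_countable _,
    fun x => (one_le_minimalSolution hz1 x).trans (le_iSup m 0 x), ?_, ae_of_all _ fun x => ?_⟩
  · filter_upwards [ae_lt_top (measurable_of_countable _) hint] with x hx htop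
    simp [htop] at hx
  · rw [Phi_iSup_restrict hA hAU hmono x, iSup_apply]
    exact iSup_congr fun k => congrFun (hfix k) x

end Restriction

lemma tendsto_csSup_of_antitone {A : Set ℝ} {B : ℕ → Set ℝ} (hB : Antitone B)
    (hBbdd : ∀ k, BddAbove (B k)) (hA : A.Nonempty) (hAB : ∀ k, A ⊆ B k)
    (hlim : ∀ z, sSup A < z → (∀ k, z < sSup (B k)) → z ∈ A) :
    Tendsto (fun k => sSup (B k)) atTop (nhds (sSup A)) := by
  have hle : ∀ k, sSup A ≤ sSup (B k) := fun k => csSup_le_csSup (hBbdd k) hA (hAB k)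
  have hanti : Antitone fun k => sSup (B k) := fun k l hkl =>
    csSup_le_csSup (hBbdd k) (hA.mono (hAB l)) (hB hkl)
  have hbdd : BddBelow (Set.range fun k => sSup (B k)) := ⟨sSup A, Set.forall_mem_range.2 hle⟩
  convert tendsto_atTop_ciInf hanti hbdd
  refine le_antisymm (le_ciInf hle) (not_lt.1 fun hlt => ?_)
  obtain ⟨z, hAz, hz⟩ := exists_between hlt
  have hzA := hlim z hAz fun k => hz.trans_le (ciInf_le hbdd k)
  exact (le_csSup ((hBbdd 0).mono (hAB 0)) hzA).not_gt hAz

section Exhaustion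

variable {X : Type*} [MeasurableSpace X] [Countable X] [MeasurableSingletonClass X]
  {μ : Measure X} [IsFiniteMeasure μ] {κ : X → X → ℝ} {b : ℝ}

lemma rstar_le_rstarAll_restrict (hb : 0 < b) (hbκ : ∀ x y, b ≤ κ x y) {A : Set X}
    (hAfin : A.Finite) (hA : 0 < μ A) : rstar μ κ ≤ rstarAll (μ.restrict A) κ := by
  rw [rstar_eq_sSup, rstarAll_eq_sSup]
  exact csSup_le_csSup (bddAbove_solutionSet_restrict hb hbκ hA) ⟨1, one_mem_aeSolutionSet⟩
    (aeSolutionSet_subset_solutionSet_restrict hAfin)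

lemma rstarAll_restrict_anti (hb : 0 < b) (hbκ : ∀ x y, b ≤ κ x y) {A B : Set X}
    (hAfin : A.Finite) (hAB : A ⊆ B) (hA : 0 < μ A) :
    rstarAll (μ.restrict B) κ ≤ rstarAll (μ.restrict A) κ := by
  rw [rstarAll_eq_sSup, rstarAll_eq_sSup]
  exact csSup_le_csSup (bddAbove_solutionSet_restrict hb hbκ hA) ⟨1, one_mem_solutionSet⟩
    (solutionSet_restrict_anti hAfin hAB)

lemma tendsto_rstarAll_restrict (hb : 0 < b) (hbκ : ∀ x y, b ≤ κ x y) {A : ℕ → Set X}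
    (hA : Monotone A) (hAfin : ∀ k, (A k).Finite) (hAU : ⋃ k, A k = Set.univ)
    (hA0 : 0 < μ (A 0)) :
    Tendsto (fun k => rstarAll (μ.restrict (A k)) κ) atTop (nhds (rstar μ κ)) := by
  have hpos : ∀ k, 0 < μ (A k) := fun k => hA0.trans_le (measure_mono (hA k.zero_le))
  simp only [rstarAll_eq_sSup, rstar_eq_sSup]
  refine tendsto_csSup_of_antitone (fun k l hkl => solutionSet_restrict_anti (hAfin k) (hA hkl))
    (fun k => bddAbove_solutionSet_restrict hb hbκ (hpos k)) ⟨1, one_mem_aeSolutionSet⟩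
    (fun k => aeSolutionSet_subset_solutionSet_restrict (hAfin k)) fun z hz hzk => ?_
  have hz1 : 1 ≤ z := by
    refine (le_csSup ?_ one_mem_aeSolutionSet).trans hz.le
    exact (bddAbove_solutionSet_restrict hb hbκ hA0).mono
      (aeSolutionSet_subset_solutionSet_restrict (hAfin 0))
  refine mem_aeSolutionSet_of_forall_mem_solutionSet_restrict hb hbκ hA hAU hA0 fun k => ?_
  obtain ⟨z', hz', hzz'⟩ := exists_lt_of_lt_csSup ⟨1, one_mem_solutionSet⟩ (hzk k)
  exact mem_solutionSet_restrict_of_le (hAfin k) hz1 hzz'.le hz'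

end Exhaustion

theorem stmt16_general (S : Set ℕ)
    (μ : Measure S) [IsProbabilityMeasure μ]
    (κ : S → S → ℝ)
    (hκinf : ∃ b : ℝ, 0 < b ∧ ∀ x y, b ≤ κ x y)
    (M : ℕ → ℝ) (hM : ∀ D, M D = (μ {y : S | (y : ℕ) ≤ D}).toReal)
    (μhat : ℕ → Measure S)
    (hμhat : ∀ D,
      μhat D = (ENNReal.ofReal (M D))⁻¹ • μ.restrict {y : S | (y : ℕ) ≤ D})
    (rhat : ℕ → ℝ)
    (hrhat : ∀ D, rhat D = rstarAll (μhat D) (fun x y => M D * κ x y)) :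
    (∀ D : ℕ, 0 < μ {y : S | (y : ℕ) ≤ D} → rstar μ κ ≤ rhat D) ∧
    (∀ D D' : ℕ, D ≤ D' → 0 < μ {y : S | (y : ℕ) ≤ D} → rhat D' ≤ rhat D) ∧
    Tendsto rhat atTop (nhds (rstar μ κ)) := by
  obtain ⟨b, hb, hbκ⟩ := hκinf
  set A : ℕ → Set S := fun D => {y : S | (y : ℕ) ≤ D}
  have hA : Monotone A := fun D D' h y hy => le_trans hy h
  have hAfin : ∀ D, (A D).Finite := fun D =>
    (Set.finite_Iic D).preimage Subtype.val_injective.injOn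
  have hAU : ⋃ D, A D = Set.univ := Set.iUnion_eq_univ_iff.2 fun y => ⟨y, le_refl (y : ℕ)⟩
  have hrhat' : ∀ D, 0 < μ (A D) → rhat D = rstarAll (μ.restrict (A D)) κ := fun D hD => by
    rw [hrhat, hμhat, hM,
      rstarAll_smul_measure_mul_kernel (ENNReal.toReal_pos hD.ne' (measure_ne_top μ _))]
  refine ⟨fun D hD => (hrhat' D hD).symm ▸ rstar_le_rstarAll_restrict hb hbκ (hAfin D) hD,
    fun D D' hDD' hD => ?_, ?_⟩
  · rw [hrhat' D hD, hrhat' D' (hD.trans_le (measure_mono (hA hDD')))]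
    exact rstarAll_restrict_anti hb hbκ (hAfin D) (hA hDD') hD
  obtain ⟨D₀, hD₀⟩ : ∃ D, 0 < μ (A D) := by
    by_contra! h
    have := measure_iUnion_null fun D => nonpos_iff_eq_zero.1 (h D)
    simp [hAU] at this
  have hpos : ∀ k, 0 < μ (A (k + D₀)) := fun k =>
    hD₀.trans_le (measure_mono (hA (Nat.le_add_left D₀ k)))
  rw [← tendsto_add_atTop_iff_nat D₀]
  refine (tendsto_rstarAll_restrict hb hbκ (fun k l hkl => hA (Nat.add_le_add_right hkl D₀))
    (fun k => hAfin _) ?_ (hpos 0)).congr fun k => (hrhat' _ (hpos k)).symm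
  exact Set.iUnion_eq_univ_iff.2 fun y => ⟨y, Nat.le_add_right _ _⟩

theorem stmt16 (S : Set ℕ) (hS : ∀ n ∈ S, 0 < n)
    (μ : Measure S) [IsProbabilityMeasure μ]
    (κ : S → S → ℝ) (hκmeas : Measurable (Function.uncurry κ))
    (hκsymm : ∀ x y, κ x y = κ y x) (hκpos : ∀ x y, 0 < κ x y)
    (hκinf : ∃ b : ℝ, 0 < b ∧ ∀ x y, b ≤ κ x y)
    (hκ2 : ∀ x, Integrable (fun y => κ x y ^ 2) μ)
    (ψ : S → ℝ) (hψ : ∀ x, ψ x = Real.sqrt (∫ y, κ x y ^ 2 ∂μ))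
    (a : ℝ) (ha : 0 < a)
    (hexp : Integrable (fun x => Real.exp (a * ψ x)) μ)
    (hnorm : opNorm μ κ < 1)
    (T1 : S → ℝ) (hT1 : ∀ x, T1 x = ∫ y, κ x y ∂μ)
    (hC : (∃ B : ℝ, ∀ x y, κ x y ≤ B) ∨
      ((∀ x x' y : S, (x : ℕ) ≤ (x' : ℕ) → κ x y ≤ κ x' y) ∧
       (∀ x y y' : S, (y : ℕ) ≤ (y' : ℕ) → κ x y ≤ κ x y') ∧
       ∃ c₁ : ℝ, 0 < c₁ ∧ ∀ x y, κ x y ≤ c₁ * T1 x * T1 y))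
    (M : ℕ → ℝ) (hM : ∀ D, M D = (μ {y : S | (y : ℕ) ≤ D}).toReal)
    (μhat : ℕ → Measure S)
    (hμhat : ∀ D,
      μhat D = (ENNReal.ofReal (M D))⁻¹ • μ.restrict {y : S | (y : ℕ) ≤ D})
    (rhat : ℕ → ℝ)
    (hrhat : ∀ D, rhat D = rstarAll (μhat D) (fun x y => M D * κ x y)) :
    (∀ D : ℕ, 0 < μ {y : S | (y : ℕ) ≤ D} → rstar μ κ ≤ rhat D) ∧
    (∀ D D' : ℕ, D ≤ D' → 0 < μ {y : S | (y : ℕ) ≤ D} → rhat D' ≤ rhat D) ∧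
    Tendsto rhat atTop (nhds (rstar μ κ)) :=
  stmt16_general S μ κ hκinf M hM μhat hμhat rhat hrhat
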